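/- arXiv:2502.03313 — 4 statements merged into one kernel-verified Lean document; each statement's English description precedes it below -/
import Mathlib

section
/- Strong duality for the minimax resistance characterization: Let (u_1,v_1),…,(u_t,v_t) (t ≥ 1) be pairs of distinct vertices, each pair contained in some hyperedge of H, and let Δ^{t−1} = {β ∈ ℝ^t : β_i ≥ 0 for all i, Σ_i β_i = 1} be the standard simplex. Then sup_{W ∈ 𝒲} ( inf_{β ∈ Δ^{t−1}} Σ_{i=1}^t β_i · 𝓔^W_{u_i,v_i} ) = inf_{β ∈ Δ^{t−1}} ( sup_{W ∈ 𝒲} Σ_{i=1}^t β_i · 𝓔^W_{u_i,v_i} ). -/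
open Finset

/-- The function on unordered pairs sending `{a,b}` to `(x a - x b)^2`. -/
noncomputable def sqd {V : Type*} (x : V → ℝ) : Sym2 V → ℝ :=
  Sym2.lift ⟨fun a b => (x a - x b) ^ 2, fun a b => by ring⟩

/-- The unordered pairs of distinct vertices inside a hyperedge `e`. -/
def pairs {V : Type*} [DecidableEq V] (e : Finset V) : Finset (Sym2 V) :=
  e.sym2.filter fun p => ¬ p.IsDiag

/-- The energy `E^W(x)` of a potential vector `x` under weight assignment `w`. -/
noncomputable def energy {V : Type*} [DecidableEq V] (H : Finset (Finset V))
    (w : Finset V → Sym2 V → ℝ) (x : V → ℝ) : ℝ :=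
  ∑ e ∈ H, ∑ p ∈ pairs e, w e p * sqd x p

/-- Validity of a weight assignment. -/
def ValidWeight {V : Type*} [DecidableEq V] (H : Finset (Finset V)) (r : ℕ)
    (w : Finset V → Sym2 V → ℝ) : Prop :=
  (∀ e ∈ H, ∀ p ∈ pairs e, 1 / (8 * (r : ℝ) ^ 2) ≤ w e p) ∧
  (∀ e ∈ H, ∑ p ∈ pairs e, w e p = 1)

/-- The minimum energy `𝓔^W_{u,v}` between `u` and `v` under `w`. -/
noncomputable def minEnergy {V : Type*} [DecidableEq V] (H : Finset (Finset V))
    (w : Finset V → Sym2 V → ℝ) (u v : V) : ℝ :=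
  ⨅ x : {x : V → ℝ // x u = 1 ∧ x v = 0}, energy H w x.1

section Aux

set_option linter.unusedSectionVars false

variable {V : Type*} [DecidableEq V]

lemma sqd_nonneg (x : V → ℝ) (p : Sym2 V) : 0 ≤ sqd x p := by
  induction p using Sym2.ind with
  | _ a b => simp only [sqd, Sym2.lift_mk]; positivity

lemma weight_nonneg {H : Finset (Finset V)} {r : ℕ} {w : Finset V → Sym2 V → ℝ}
    (hw : ValidWeight H r w) {e : Finset V} (he : e ∈ H) {p : Sym2 V} (hp : p ∈ pairs e) :
    0 ≤ w e p :=
  le_trans (by positivity) (hw.1 e he p hp)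

lemma energy_nonneg {H : Finset (Finset V)} {r : ℕ} {w : Finset V → Sym2 V → ℝ}
    (hw : ValidWeight H r w) (x : V → ℝ) : 0 ≤ energy H w x :=
  Finset.sum_nonneg fun e he => Finset.sum_nonneg fun p hp =>
    mul_nonneg (weight_nonneg hw he hp) (sqd_nonneg x p)

/-- indicator potential -/
noncomputable def indPot (u : V) : V → ℝ := fun a => if a = u then 1 else 0

lemma indPot_mem (u v : V) (huv : u ≠ v) : indPot u u = 1 ∧ indPot u v = 0 := by
  constructor <;> simp [indPot, huv.symm]

lemma xne {u v : V} (huv : u ≠ v) : Nonempty {x : V → ℝ // x u = 1 ∧ x v = 0} :=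
  ⟨⟨indPot u, indPot_mem u v huv⟩⟩

lemma energy_bddBelow {H : Finset (Finset V)} {r : ℕ} {w : Finset V → Sym2 V → ℝ}
    (hw : ValidWeight H r w) (u v : V) :
    BddBelow (Set.range fun x : {x : V → ℝ // x u = 1 ∧ x v = 0} => energy H w x.1) :=
  ⟨0, by rintro _ ⟨x, rfl⟩; exact energy_nonneg hw x.1⟩

lemma minEnergy_nonneg {H : Finset (Finset V)} {r : ℕ} {w : Finset V → Sym2 V → ℝ}
    (hw : ValidWeight H r w) {u v : V} (huv : u ≠ v) : 0 ≤ minEnergy H w u v := by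
  haveI := xne huv
  exact le_ciInf fun x => energy_nonneg hw x.1

lemma minEnergy_le_energy {H : Finset (Finset V)} {r : ℕ} {w : Finset V → Sym2 V → ℝ}
    (hw : ValidWeight H r w) {u v : V} (x : {x : V → ℝ // x u = 1 ∧ x v = 0}) :
    minEnergy H w u v ≤ energy H w x.1 :=
  ciInf_le (energy_bddBelow hw u v) x

lemma minEnergy_le_card {H : Finset (Finset V)} {r : ℕ} {w : Finset V → Sym2 V → ℝ}
    (hw : ValidWeight H r w) {u v : V} (huv : u ≠ v) :
    minEnergy H w u v ≤ (H.card : ℝ) := by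
  refine le_trans (minEnergy_le_energy hw ⟨indPot u, indPot_mem u v huv⟩) ?_
  have h : energy H w (indPot u) ≤ ∑ e ∈ H, ∑ p ∈ pairs e, w e p := by
    refine Finset.sum_le_sum fun e he => Finset.sum_le_sum fun p hp => ?_
    have h1 : sqd (indPot u) p ≤ 1 := by
      induction p using Sym2.ind with
      | _ a b =>
        simp only [sqd, Sym2.lift_mk, indPot]
        split_ifs <;> norm_num
    calc w e p * sqd (indPot u) p ≤ w e p * 1 :=
          mul_le_mul_of_nonneg_left h1 (weight_nonneg hw he hp)
      _ = w e p := mul_one _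
  refine h.trans ?_
  rw [Finset.sum_congr rfl fun e he => hw.2 e he]
  simp

lemma energy_combo {H : Finset (Finset V)} (w w' : Finset V → Sym2 V → ℝ)
    (a b : ℝ) (x : V → ℝ) :
    energy H (fun e p => a * w e p + b * w' e p) x
      = a * energy H w x + b * energy H w' x := by
  simp only [energy, Finset.mul_sum, ← Finset.sum_add_distrib]
  exact Finset.sum_congr rfl fun e _ => Finset.sum_congr rfl fun p _ => by ring

lemma valid_combo {H : Finset (Finset V)} {r : ℕ} {w w' : Finset V → Sym2 V → ℝ}
    (hw : ValidWeight H r w) (hw' : ValidWeight H r w')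
    {a b : ℝ} (ha : 0 ≤ a) (hb : 0 ≤ b) (hab : a + b = 1) :
    ValidWeight H r (fun e p => a * w e p + b * w' e p) := by
  constructor
  · intro e he p hp
    have h1 := hw.1 e he p hp
    have h2 := hw'.1 e he p hp
    have h3 := mul_le_mul_of_nonneg_left h1 ha
    have h4 := mul_le_mul_of_nonneg_left h2 hb
    have h5 : a * (1 / (8 * (r:ℝ) ^ 2)) + b * (1 / (8 * (r:ℝ) ^ 2)) = 1 / (8 * (r:ℝ) ^ 2) := by
      rw [← add_mul, hab, one_mul]
    dsimp only
    linarith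
  · intro e he
    dsimp only
    rw [Finset.sum_add_distrib, ← Finset.mul_sum, ← Finset.mul_sum, hw.2 e he, hw'.2 e he]
    linarith

lemma minEnergy_concave {H : Finset (Finset V)} {r : ℕ} {w w' : Finset V → Sym2 V → ℝ}
    (hw : ValidWeight H r w) (hw' : ValidWeight H r w')
    {a b : ℝ} (ha : 0 ≤ a) (hb : 0 ≤ b) {u v : V} (huv : u ≠ v) :
    a * minEnergy H w u v + b * minEnergy H w' u v
      ≤ minEnergy H (fun e p => a * w e p + b * w' e p) u v := by
  haveI := xne huv
  refine le_ciInf fun x => ?_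
  rw [energy_combo]
  exact add_le_add (mul_le_mul_of_nonneg_left (minEnergy_le_energy hw x) ha)
    (mul_le_mul_of_nonneg_left (minEnergy_le_energy hw' x) hb)

/-- The uniform weight assignment. -/
noncomputable def unifW : Finset V → Sym2 V → ℝ := fun e _ => 1 / ((pairs e).card : ℝ)

lemma pairs_nonempty {e : Finset V} (he : 2 ≤ e.card) : (pairs e).Nonempty := by
  obtain ⟨a, ha, b, hb, hab⟩ := Finset.one_lt_card.mp he
  exact ⟨s(a, b), Finset.mem_filter.mpr ⟨Finset.mk_mem_sym2_iff.mpr ⟨ha, hb⟩,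
    by simp [Sym2.mk_isDiag_iff, hab]⟩⟩

lemma unif_valid {H : Finset (Finset V)} {r : ℕ} (hr : 2 ≤ r)
    (harity : ∀ e ∈ H, r ≤ e.card ∧ e.card ≤ 2 * r) :
    ValidWeight H r (unifW (V := V)) := by
  have hcard : ∀ e ∈ H, 0 < (pairs e).card ∧ (pairs e).card ≤ 8 * r ^ 2 := by
    intro e he
    obtain ⟨h1, h2⟩ := harity e he
    refine ⟨Finset.card_pos.mpr (pairs_nonempty (le_trans hr h1)), ?_⟩
    have hle : (pairs e).card ≤ e.sym2.card := Finset.card_filter_le _ _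
    rw [Finset.card_sym2, Nat.choose_two_right] at hle
    have h3 : (e.card + 1) * (e.card + 1 - 1) ≤ (2 * r + 1) * (2 * r) := by
      apply Nat.mul_le_mul <;> omega
    have h4 : (e.card + 1) * (e.card + 1 - 1) / 2 ≤ (2 * r + 1) * (2 * r) / 2 :=
      Nat.div_le_div_right h3
    have h5 : (2 * r + 1) * (2 * r) / 2 = (2 * r + 1) * r := by
      rw [show (2 * r + 1) * (2 * r) = ((2 * r + 1) * r) * 2 by ring,
        Nat.mul_div_cancel _ two_pos]
    have h6 : (2 * r + 1) * r ≤ 8 * r ^ 2 := by nlinarith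
    omega
  constructor
  · intro e he p hp
    obtain ⟨h1, h2⟩ := hcard e he
    have h3 : ((pairs e).card : ℝ) ≤ 8 * (r : ℝ) ^ 2 := by
      calc ((pairs e).card : ℝ) ≤ ((8 * r ^ 2 : ℕ) : ℝ) := by exact_mod_cast h2
        _ = 8 * (r : ℝ) ^ 2 := by push_cast; ring
    exact one_div_le_one_div_of_le (by exact_mod_cast h1) h3
  · intro e he
    obtain ⟨h1, _⟩ := hcard e he
    simp only [unifW, Finset.sum_const, nsmul_eq_mul]
    field_simp

end Aux

set_option maxHeartbeats 1000000 in
/-- **Strong duality for the minimax resistance characterization.** -/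
theorem strong_duality_minimax_resistance
    {V : Type*} [Fintype V] [DecidableEq V]
    (H : Finset (Finset V)) (r : ℕ) (hr : 2 ≤ r)
    (harity : ∀ e ∈ H, r ≤ e.card ∧ e.card ≤ 2 * r)
    (t : ℕ) (ht : 1 ≤ t) (u v : Fin t → V)
    (hpair : ∀ i, u i ≠ v i ∧ ∃ e ∈ H, u i ∈ e ∧ v i ∈ e) :
    (⨆ w : {w : Finset V → Sym2 V → ℝ // ValidWeight H r w},
      ⨅ β : {β : Fin t → ℝ // (∀ i, 0 ≤ β i) ∧ ∑ i, β i = 1},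
        ∑ i, β.1 i * minEnergy H w.1 (u i) (v i)) =
    (⨅ β : {β : Fin t → ℝ // (∀ i, 0 ≤ β i) ∧ ∑ i, β i = 1},
      ⨆ w : {w : Finset V → Sym2 V → ℝ // ValidWeight H r w},
        ∑ i, β.1 i * minEnergy H w.1 (u i) (v i)) := by
  classical
  haveI : Nonempty (Fin t) := ⟨⟨0, ht⟩⟩
  set W := {w : Finset V → Sym2 V → ℝ // ValidWeight H r w} with hW
  set Δ := {β : Fin t → ℝ // (∀ i, 0 ≤ β i) ∧ ∑ i, β i = 1} with hΔ
  haveI hWne : Nonempty W := ⟨⟨unifW, unif_valid hr harity⟩⟩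
  have htR : (0 : ℝ) < t := by exact_mod_cast ht
  haveI hΔne : Nonempty Δ := ⟨⟨fun _ => 1 / t, fun i => by positivity, by
    rw [Finset.sum_const]; simp; field_simp⟩⟩
  set g : W → Fin t → ℝ := fun w i => minEnergy H w.1 (u i) (v i) with hg
  set F : W → Δ → ℝ := fun w β => ∑ i, β.1 i * g w i with hF
  have hg0 : ∀ (w : W) i, 0 ≤ g w i := fun w i => minEnergy_nonneg w.2 (hpair i).1
  have hgM : ∀ (w : W) i, g w i ≤ (H.card : ℝ) := fun w i => minEnergy_le_card w.2 (hpair i).1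
  have hF0 : ∀ (w : W) (β : Δ), 0 ≤ F w β := fun w β =>
    Finset.sum_nonneg fun i _ => mul_nonneg (β.2.1 i) (hg0 w i)
  have hFM : ∀ (w : W) (β : Δ), F w β ≤ (H.card : ℝ) := by
    intro w β
    calc F w β ≤ ∑ i, β.1 i * (H.card : ℝ) :=
          Finset.sum_le_sum fun i _ => mul_le_mul_of_nonneg_left (hgM w i) (β.2.1 i)
      _ = (H.card : ℝ) := by rw [← Finset.sum_mul, β.2.2, one_mul]
  have hbb : ∀ w : W, BddBelow (Set.range fun β : Δ => F w β) :=
    fun w => ⟨0, by rintro _ ⟨β, rfl⟩; exact hF0 w β⟩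
  have hba : ∀ β : Δ, BddAbove (Set.range fun w : W => F w β) :=
    fun β => ⟨(H.card : ℝ), by rintro _ ⟨w, rfl⟩; exact hFM w β⟩
  set c : ℝ := ⨆ w : W, ⨅ β : Δ, F w β with hc
  have hinf_le_c : ∀ w : W, (⨅ β : Δ, F w β) ≤ c := by
    intro w
    have hbA : BddAbove (Set.range fun w' : W => ⨅ β : Δ, F w' β) := by
      refine ⟨(H.card : ℝ), ?_⟩
      rintro _ ⟨w', rfl⟩
      exact le_trans (ciInf_le (hbb w') (Classical.arbitrary Δ)) (hFM w' _)
    exact le_ciSup hbA w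
  -- easy direction
  have easy : c ≤ ⨅ β : Δ, ⨆ w : W, F w β := by
    refine le_ciInf fun β => ciSup_le fun w => ?_
    exact le_trans (ciInf_le (hbb w) β) (le_ciSup (hba β) w)
  -- hard direction via Hahn-Banach separation
  have hard : (⨅ β : Δ, ⨆ w : W, F w β) ≤ c := by
    set A : Set (Fin t → ℝ) := {y | ∃ w : W, ∀ i, y i ≤ g w i} with hA
    set B : Set (Fin t → ℝ) := Set.univ.pi fun _ => Set.Ioi c with hB
    have hBopen : IsOpen B := isOpen_set_pi Set.finite_univ fun i _ => isOpen_Ioi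
    have hBconv : Convex ℝ B := convex_pi fun i _ => convex_Ioi c
    have hAconv : Convex ℝ A := by
      rintro y ⟨wy, hy⟩ z ⟨wz, hz⟩ a b ha hb hab
      refine ⟨⟨fun e p => a * wy.1 e p + b * wz.1 e p, valid_combo wy.2 wz.2 ha hb hab⟩,
        fun i => ?_⟩
      simp only [Pi.add_apply, Pi.smul_apply, smul_eq_mul]
      calc a * y i + b * z i ≤ a * g wy i + b * g wz i :=
            add_le_add (mul_le_mul_of_nonneg_left (hy i) ha)
              (mul_le_mul_of_nonneg_left (hz i) hb)
        _ ≤ _ := minEnergy_concave wy.2 wz.2 ha hb (hpair i).1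
    have hdisj : Disjoint B A := by
      rw [Set.disjoint_left]
      rintro y hyB ⟨w, hyg⟩
      have hyB' : ∀ i, c < y i := fun i => hyB i (Set.mem_univ i)
      set δ : ℝ := Finset.univ.inf' Finset.univ_nonempty (fun i => y i - c) with hδ
      have hδpos : 0 < δ := by
        rw [hδ, Finset.lt_inf'_iff]
        intro i _
        linarith [hyB' i]
      have hle : c + δ ≤ ⨅ β : Δ, F w β := by
        refine le_ciInf fun β => ?_
        have hterm : ∀ i, β.1 i * (c + δ) ≤ β.1 i * g w i := by
          intro i
          refine mul_le_mul_of_nonneg_left ?_ (β.2.1 i)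
          have hd : δ ≤ y i - c := Finset.inf'_le _ (Finset.mem_univ i)
          linarith [hyg i]
        calc c + δ = ∑ i, β.1 i * (c + δ) := by
              rw [← Finset.sum_mul, β.2.2, one_mul]
          _ ≤ F w β := Finset.sum_le_sum fun i _ => hterm i
      linarith [hinf_le_c w, hle]
    obtain ⟨f, s, hfB, hfA⟩ := geometric_hahn_banach_open hBconv hBopen hAconv hdisj
    set lam : Fin t → ℝ := fun i => f fun j => if i = j then 1 else 0 with hlam
    have hf_eq : ∀ y : Fin t → ℝ, f y = ∑ i, y i * lam i := by
      intro y
      have h := LinearMap.pi_apply_eq_sum_univ (f : (Fin t → ℝ) →ₗ[ℝ] ℝ) y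
      simpa [smul_eq_mul, hlam] using h
    have hconstB : ∀ ε : ℝ, 0 < ε → (fun _ : Fin t => c + ε) ∈ B := by
      intro ε hε i _
      simp only [Set.mem_Ioi]
      linarith
    have hlam_nonpos : ∀ i, lam i ≤ 0 := by
      intro i
      by_contra h
      push_neg at h
      have hfc : f (fun _ : Fin t => c + 1) < s := hfB _ (hconstB 1 one_pos)
      set s' : ℝ := (s - f (fun _ : Fin t => c + 1)) / lam i + 1 with hs'
      have hs'pos : 0 < s' := by
        have hq : 0 < (s - f (fun _ : Fin t => c + 1)) / lam i := by
          apply div_pos <;> linarith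
        rw [hs']
        linarith
      have hys : (fun j => (c + 1) + s' * (if i = j then 1 else 0))
          = (fun _ : Fin t => c + 1) + s' • (fun j : Fin t => if i = j then (1:ℝ) else 0) := by
        funext j; simp [smul_eq_mul]
      have hyB : (fun j => (c + 1) + s' * (if i = j then 1 else 0)) ∈ B := by
        intro j _
        simp only [Set.mem_Ioi]
        split_ifs <;> nlinarith
      have hlt := hfB _ hyB
      rw [hys, map_add, map_smul, smul_eq_mul] at hlt
      have heq : s' * lam i = (s - f (fun _ : Fin t => c + 1)) + lam i := by
        rw [hs']
        field_simp
      rw [show f (fun j => if i = j then 1 else 0) = lam i from rfl] at hlt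
      linarith
    have hzeroA : (fun _ : Fin t => (0:ℝ)) ∈ A :=
      ⟨Classical.arbitrary W, fun i => hg0 _ i⟩
    have hLneg : ∑ i, lam i < 0 := by
      rcases lt_or_eq_of_le (Finset.sum_nonpos fun i _ => hlam_nonpos i) with h | h
      · exact h
      · exfalso
        have hall : ∀ i ∈ Finset.univ, lam i = 0 :=
          (Finset.sum_eq_zero_iff_of_nonpos fun i _ => hlam_nonpos i).mp h
        have hf0 : ∀ y : Fin t → ℝ, f y = 0 := by
          intro y
          rw [hf_eq]
          exact Finset.sum_eq_zero fun i hi => by rw [hall i hi, mul_zero]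
        have h1 := hfB _ (hconstB 1 one_pos)
        have h2 := hfA _ hzeroA
        rw [hf0] at h1 h2
        linarith
    set L : ℝ := -∑ i, lam i with hL
    have hLpos : 0 < L := by rw [hL]; linarith
    set β : Fin t → ℝ := fun i => -lam i / L with hβ
    have hβprop : (∀ i, 0 ≤ β i) ∧ ∑ i, β i = 1 := by
      constructor
      · intro i
        exact div_nonneg (neg_nonneg.mpr (hlam_nonpos i)) hLpos.le
      · rw [hβ]
        simp only
        rw [← Finset.sum_div, Finset.sum_neg_distrib, ← hL, div_self hLpos.ne']
    have hkey : ∀ w : W, F w ⟨β, hβprop⟩ ≤ c := by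
      intro w
      have hsA : s ≤ f (g w) := hfA _ ⟨w, fun i => le_refl _⟩
      rw [hf_eq] at hsA
      have hFval : F w ⟨β, hβprop⟩ = (∑ i, g w i * lam i) * (-(1 / L)) := by
        rw [hF, Finset.sum_mul]
        refine Finset.sum_congr rfl fun i _ => ?_
        simp only [hβ]
        ring
      have hstep : F w ⟨β, hβprop⟩ ≤ s * (-(1 / L)) := by
        rw [hFval]
        refine mul_le_mul_of_nonpos_right hsA ?_
        simp only [neg_nonpos]
        positivity
      have hsc : s * (-(1 / L)) ≤ c := by
        have hε : ∀ ε : ℝ, 0 < ε → s * (-(1 / L)) < c + ε := by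
          intro ε hε
          have h1 := hfB _ (hconstB ε hε)
          rw [hf_eq] at h1
          have h2 : ∑ i, (c + ε) * lam i = (c + ε) * ∑ i, lam i := by
            rw [Finset.mul_sum]
          rw [h2] at h1
          have h3 : (c + ε) * ∑ i, lam i = -(c + ε) * L := by rw [hL]; ring
          rw [h3] at h1
          -- -(c+ε) * L < s  ⇒  -s/L < c + ε
          have h4 : -s < (c + ε) * L := by nlinarith
          have h5 : s * (-(1 / L)) = -s / L := by field_simp
          rw [h5, div_lt_iff₀ hLpos]
          linarith
        by_contra hcon
        push_neg at hcon
        have := hε ((s * (-(1 / L)) - c) / 2) (by linarith)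
        linarith
      exact hstep.trans hsc
    have hbbI : BddBelow (Set.range fun β : Δ => ⨆ w : W, F w β) := by
      refine ⟨0, ?_⟩
      rintro _ ⟨β', rfl⟩
      exact le_trans (hF0 (Classical.arbitrary W) β') (le_ciSup (hba β') _)
    exact le_trans (ciInf_le hbbI ⟨β, hβprop⟩) (ciSup_le hkey)
  exact le_antisymm easy hard
end

section
/- Bypassing weight assignments (conditional form of the corollary of the optimality conditions): Let W ∈ 𝒲 be a valid weight assignment with weights w_e(a,b), let β_1,…,β_t ≥ 0 be reals, and let x_1,…,x_t : V → ℝ. For an unordered pair {a,b} of vertices write D(a,b) = Σ_{i=1}^t β_i (x_i a − x_i b)². Suppose that within every hyperedge f of H: any two pairs {a,b},{c,d} ⊆ f with w_f(a,b) > 1/(8r²) and w_f(c,d) > 1/(8r²) satisfy D(a,b) = D(c,d), and any two pairs with w_f(a,b) > 1/(8r²) and w_f(c,d) = 1/(8r²) satisfy D(a,b) ≥ D(c,d). Then Σ_{f∈H} max_{{a,b}⊆f} D(a,b) ≤ 2 · Σ_{i=1}^t β_i · E^W(x_i). -/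
open Finset

/-- **Bypassing weight assignments.** Given a valid weight assignment `w`, nonnegative reals
`β_i` and potentials `x_i`, write `D(p) = Σ_i β_i (x_i a − x_i b)²` for `p = {a,b}`. If within
every hyperedge `f` of `H` two pairs of weight `> 1/(8r²)` have equal `D`-values, and a pair
of weight `> 1/(8r²)` has `D`-value at least that of a pair with weight `= 1/(8r²)`, then
`Σ_{f∈H} max_{{a,b}⊆f} D(a,b) ≤ 2 Σ_i β_i E^W(x_i)`. -/
theorem bypass_weight_assignments
    {V : Type*} [Fintype V] [DecidableEq V]
    (H : Finset (Finset V)) (r : ℕ) (hr : 2 ≤ r)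
    (harity : ∀ e ∈ H, r ≤ e.card ∧ e.card ≤ 2 * r)
    (w : Finset V → Sym2 V → ℝ) (hw : ValidWeight H r w)
    (t : ℕ) (β : Fin t → ℝ) (hβ0 : ∀ i, 0 ≤ β i)
    (x : Fin t → V → ℝ)
    (heq : ∀ f ∈ H, ∀ p ∈ pairs f, ∀ q ∈ pairs f,
      1 / (8 * (r : ℝ) ^ 2) < w f p → 1 / (8 * (r : ℝ) ^ 2) < w f q →
      ∑ i, β i * sqd (x i) p = ∑ i, β i * sqd (x i) q)
    (hge : ∀ f ∈ H, ∀ p ∈ pairs f, ∀ q ∈ pairs f,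
      1 / (8 * (r : ℝ) ^ 2) < w f p → w f q = 1 / (8 * (r : ℝ) ^ 2) →
      ∑ i, β i * sqd (x i) q ≤ ∑ i, β i * sqd (x i) p) :
    ∑ f ∈ H, sSup {d : ℝ | ∃ p ∈ pairs f, d = ∑ i, β i * sqd (x i) p}
      ≤ 2 * ∑ i, β i * energy H w (x i) := by
  classical
  have hr0 : (0:ℝ) < r := by
    have : (2:ℝ) ≤ r := by exact_mod_cast hr
    linarith
  have hr2 : (2:ℝ) ≤ r := by exact_mod_cast hr
  have hc : (0:ℝ) < 1 / (8 * (r : ℝ) ^ 2) := by positivity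
  have hsqd : ∀ (y : V → ℝ) (p : Sym2 V), 0 ≤ sqd y p := by
    intro y p
    induction p using Sym2.ind with
    | _ a b => simp only [sqd, Sym2.lift_mk]; positivity
  have hβsum : ∀ p : Sym2 V, (0:ℝ) ≤ ∑ i, β i * sqd (x i) p := fun p =>
    Finset.sum_nonneg fun i _ => mul_nonneg (hβ0 i) (hsqd _ _)
  have hswap : ∑ i, β i * energy H w (x i)
      = ∑ f ∈ H, ∑ p ∈ pairs f, w f p * ∑ i, β i * sqd (x i) p := by
    unfold energy
    simp only [Finset.mul_sum]
    rw [Finset.sum_comm]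
    refine Finset.sum_congr rfl fun f _ => ?_
    rw [Finset.sum_comm]
    refine Finset.sum_congr rfl fun p _ => ?_
    refine Finset.sum_congr rfl fun i _ => ?_
    ring
  rw [hswap, Finset.mul_sum]
  refine Finset.sum_le_sum fun f hf => ?_
  set D : Sym2 V → ℝ := fun p => ∑ i, β i * sqd (x i) p with hD
  -- card bound
  have hcard : ((pairs f).card : ℝ) * (1 / (8 * (r : ℝ) ^ 2)) ≤ 1/2 := by
    have h1 : (pairs f).card ≤ f.sym2.card := Finset.card_filter_le _ _
    have h2 : f.sym2.card = (f.card + 1) * f.card / 2 := by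
      rw [Finset.card_sym2, Nat.choose_two_right]
      simp
    have h3 : f.card ≤ 2 * r := (harity f hf).2
    have h4 : (pairs f).card ≤ 2 * r ^ 2 + r := by
      have hm : (f.card + 1) * f.card ≤ (2 * r + 1) * (2 * r) :=
        Nat.mul_le_mul (by omega) h3
      have hd : (f.card + 1) * f.card / 2 ≤ (2 * r + 1) * (2 * r) / 2 :=
        Nat.div_le_div_right hm
      have he : (2 * r + 1) * (2 * r) / 2 = 2 * r ^ 2 + r := by
        have h9 : (2 * r + 1) * (2 * r) = 2 * (2 * r ^ 2 + r) := by ring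
        rw [h9, Nat.mul_div_cancel_left _ (by norm_num)]
      omega
    have h4' : ((pairs f).card : ℝ) ≤ 2 * (r:ℝ) ^ 2 + r := by exact_mod_cast h4
    rw [mul_one_div, div_le_iff₀ (by positivity)]
    nlinarith [sq_nonneg ((r:ℝ) - 2)]
  -- heavy pair exists
  obtain ⟨q, hq, hqw⟩ : ∃ q ∈ pairs f, 1 / (8 * (r : ℝ) ^ 2) < w f q := by
    by_contra hcon
    push_neg at hcon
    have hsum1 := hw.2 f hf
    have hle : ∑ p ∈ pairs f, w f p ≤ ∑ p ∈ pairs f, 1 / (8 * (r : ℝ) ^ 2) :=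
      Finset.sum_le_sum fun p hp => hcon p hp
    rw [Finset.sum_const, nsmul_eq_mul] at hle
    linarith [hsum1 ▸ hle]
  have hmax : ∀ p ∈ pairs f, D p ≤ D q := by
    intro p hp
    rcases (hw.1 f hf p hp).lt_or_eq with h | h
    · exact le_of_eq (heq f hf p hp q hq h hqw)
    · exact hge f hf q hq p hp hqw h.symm
  have hsup : sSup {d : ℝ | ∃ p ∈ pairs f, d = ∑ i, β i * sqd (x i) p} ≤ D q :=
    Real.sSup_le (by rintro d ⟨p, hp, rfl⟩; exact hmax p hp) (hβsum q)
  refine hsup.trans ?_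
  set S := (pairs f).filter (fun p => 1 / (8 * (r : ℝ) ^ 2) < w f p) with hSdef
  have hS_sub : S ⊆ pairs f := Finset.filter_subset _ _
  have hwnn : ∀ p ∈ pairs f, 0 ≤ w f p := fun p hp => le_trans hc.le (hw.1 f hf p hp)
  have h1 : ∑ p ∈ S, w f p * D p ≤ ∑ p ∈ pairs f, w f p * D p :=
    Finset.sum_le_sum_of_subset_of_nonneg hS_sub
      (fun p hp _ => mul_nonneg (hwnn p hp) (hβsum p))
  have h2 : ∑ p ∈ S, w f p * D p = D q * ∑ p ∈ S, w f p := by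
    rw [Finset.mul_sum]
    refine Finset.sum_congr rfl fun p hp => ?_
    have hDp : D p = D q := heq f hf p (hS_sub hp) q hq (Finset.mem_filter.mp hp).2 hqw
    rw [hDp]; ring
  have h3 : ∑ p ∈ pairs f \ S, w f p = ((pairs f \ S).card : ℝ) * (1 / (8 * (r : ℝ) ^ 2)) := by
    rw [Finset.sum_congr rfl (fun p hp => ?_), Finset.sum_const, nsmul_eq_mul]
    obtain ⟨hp1, hp2⟩ := Finset.mem_sdiff.mp hp
    have : ¬ (1 / (8 * (r : ℝ) ^ 2) < w f p) := fun h => hp2 (Finset.mem_filter.mpr ⟨hp1, h⟩)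
    exact le_antisymm (not_lt.mp this) (hw.1 f hf p hp1)
  have hsplit : ∑ p ∈ pairs f \ S, w f p + ∑ p ∈ S, w f p = 1 := by
    rw [Finset.sum_sdiff hS_sub, hw.2 f hf]
  have h5 : ((pairs f \ S).card : ℝ) ≤ ((pairs f).card : ℝ) := by
    exact_mod_cast Finset.card_le_card (Finset.sdiff_subset)
  have h6 : ((pairs f \ S).card : ℝ) * (1 / (8 * (r : ℝ) ^ 2))
      ≤ ((pairs f).card : ℝ) * (1 / (8 * (r : ℝ) ^ 2)) :=
    mul_le_mul_of_nonneg_right h5 hc.le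
  have hSsum : (1:ℝ)/2 ≤ ∑ p ∈ S, w f p := by linarith
  have h7 : D q * (1/2) ≤ D q * ∑ p ∈ S, w f p :=
    mul_le_mul_of_nonneg_left hSsum (hβsum q)
  have hDq : D q = ∑ i, β i * sqd (x i) q := rfl
  linarith
end

section
/- Geometric grouping step (final step in the proof of the Collective Energy Lemma): Assume |V| = n ≥ 2, let x_1,…,x_t : V → ℝ with 1 ≤ t ≤ n(n−1)/2, and let β ∈ ℝ^t with β_i ≥ 0 for all i and Σ_i β_i = 1. Then there exists a nonempty subset S ⊆ {1,…,t} such that 𝓔^H({x_i}_{i∈S}) ≤ 12 · |S| · log₂(n) · Σ_{e∈H} max_{{a,b}⊆e} Σ_{i=1}^t β_i (x_i a − x_i b)². -/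
open Finset

/-- Harmonic sum bound: `∑_{k=1}^t 1/k ≤ 1 + log t`. -/
lemma my_harmonic_le_one_add_log (t : ℕ) :
    ∑ k ∈ Finset.range t, (1 : ℝ) / (k + 1) ≤ 1 + Real.log t := by
  have h := harmonic_le_one_add_log t
  have heq : ((harmonic t : ℚ) : ℝ) = ∑ k ∈ Finset.range t, (1 : ℝ) / (k + 1) := by
    rw [harmonic]
    push_cast
    apply Finset.sum_congr rfl
    intro k _
    rw [one_div]
  rw [heq] at h
  exact h

/-- Combinatorial selection: if `β` is a probability vector on `Fin t` and
`1 + log t ≤ 12 * L` with `0 < L`, then there is a nonempty `S` with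
`1 ≤ 12 * |S| * L * β i` for all `i ∈ S`. -/
lemma exists_good_subset {t : ℕ} (ht1 : 1 ≤ t) (β : Fin t → ℝ)
    (hβ0 : ∀ i, 0 ≤ β i) (hβ1 : ∑ i, β i = 1)
    (L : ℝ) (hL : 0 < L) (hlog : 1 + Real.log t ≤ 12 * L) :
    ∃ S : Finset (Fin t), S.Nonempty ∧ ∀ i ∈ S, 1 ≤ 12 * S.card * L * β i := by
  classical
  set σ := Tuple.sort β with hσ
  set g : Fin t → ℝ := fun k => β (σ k.rev) with hg
  by_cases hcase : ∃ k : Fin t, 1 / (12 * (k + 1 : ℝ) * L) ≤ g k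
  · obtain ⟨k, hk⟩ := hcase
    refine ⟨Finset.image (fun j : Fin t => σ j.rev) (Finset.Iic k), ?_, ?_⟩
    · exact (Finset.nonempty_Iic).image _
    · have hinj : Function.Injective (fun j : Fin t => σ j.rev) :=
        σ.injective.comp Fin.rev_injective
      have hcard : (Finset.image (fun j : Fin t => σ j.rev) (Finset.Iic k)).card
          = (k : ℕ) + 1 := by
        rw [Finset.card_image_of_injective _ hinj, Fin.card_Iic]
      intro i hi
      rw [Finset.mem_image] at hi
      obtain ⟨j, hj, rfl⟩ := hi
      rw [Finset.mem_Iic] at hj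
      have hmono : Monotone (β ∘ σ) := Tuple.monotone_sort β
      have hrev : k.rev ≤ j.rev := Fin.rev_le_rev.mpr hj
      have hge : g k ≤ β (σ j.rev) := hmono hrev
      have h1 : 1 / (12 * ((k : ℕ) + 1 : ℝ) * L) ≤ β (σ j.rev) := le_trans hk hge
      have hc : (0 : ℝ) < 12 * ((k : ℕ) + 1 : ℝ) * L := by positivity
      rw [div_le_iff₀ hc] at h1
      rw [hcard]
      push_cast
      push_cast at h1
      nlinarith [h1]
  · exfalso
    push_neg at hcase
    have hsum : ∑ k : Fin t, g k = 1 := by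
      rw [← hβ1]
      exact Fintype.sum_bijective (fun j : Fin t => σ j.rev)
        (σ.bijective.comp Fin.rev_bijective) _ _ (fun j => rfl)
    have hlt : (1 : ℝ) < ∑ k : Fin t, 1 / (12 * (k + 1 : ℝ) * L) := by
      calc (1 : ℝ) = ∑ k : Fin t, g k := hsum.symm
        _ < _ := ?_
      apply Finset.sum_lt_sum_of_nonempty
      · exact Finset.univ_nonempty_iff.mpr ⟨⟨0, ht1⟩⟩
      · intro k _; exact hcase k
    have heq : ∑ k : Fin t, 1 / (12 * (k + 1 : ℝ) * L)
        = (1 / (12 * L)) * ∑ k ∈ Finset.range t, (1 : ℝ) / (k + 1) := by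
      rw [Finset.mul_sum, ← Fin.sum_univ_eq_sum_range (fun k : ℕ => (1 : ℝ)/(12*L) * (1/(k+1)))]
      apply Finset.sum_congr rfl
      intro k _
      field_simp
    have hhar := my_harmonic_le_one_add_log t
    have h12 : (0 : ℝ) < 12 * L := by positivity
    have : (1 : ℝ) < (1 / (12 * L)) * (1 + Real.log t) := by
      calc (1 : ℝ) < (1 / (12 * L)) * ∑ k ∈ Finset.range t, (1 : ℝ) / (k + 1) := by
            rw [← heq]; exact hlt
        _ ≤ (1 / (12 * L)) * (1 + Real.log t) := by
            apply mul_le_mul_of_nonneg_left hhar (by positivity)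
    rw [div_mul_eq_mul_div, one_mul, lt_div_iff₀ h12, one_mul] at this
    linarith

/-- **Geometric grouping step in the proof of the Collective Energy Lemma.** If `n ≥ 2`,
`1 ≤ t ≤ n(n−1)/2`, and `β` is a probability vector, then there is a nonempty subset
`S ⊆ {1,…,t}` with
`𝓔^H({x_i}_{i∈S}) ≤ 12·|S|·log₂(n)·Σ_{e∈H} max_{{a,b}⊆e} Σ_i β_i (x_i a − x_i b)²`,
where `𝓔^H({x_i}_{i∈S}) = Σ_{e∈H} max_{{u,v}⊆e} Σ_{i∈S} (x_i u - x i v) ^ 2` is the collective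
energy of the vectors indexed by `S`. -/
theorem geometric_grouping
    {V : Type*} [Fintype V] [DecidableEq V]
    (H : Finset (Finset V))
    (hsize : ∀ e ∈ H, 2 ≤ e.card)
    (hn : 2 ≤ Fintype.card V)
    (t : ℕ) (ht1 : 1 ≤ t) (ht2 : t ≤ Fintype.card V * (Fintype.card V - 1) / 2)
    (x : Fin t → V → ℝ)
    (β : Fin t → ℝ) (hβ0 : ∀ i, 0 ≤ β i) (hβ1 : ∑ i, β i = 1) :
    ∃ S : Finset (Fin t), S.Nonempty ∧
      (∑ e ∈ H, sSup {d : ℝ | ∃ u ∈ e, ∃ v ∈ e, d = ∑ i ∈ S, (x i u - x i v) ^ 2})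
        ≤ 12 * S.card * Real.logb 2 (Fintype.card V) *
          (∑ e ∈ H, sSup {d : ℝ | ∃ u ∈ e, ∃ v ∈ e, d = ∑ i, β i * (x i u - x i v) ^ 2}) := by
  classical
  set n := Fintype.card V with hnV
  set L : ℝ := Real.logb 2 n with hLdef
  have hlog2 : (0 : ℝ) < Real.log 2 := Real.log_pos one_lt_two
  have hn1 : (1 : ℝ) ≤ L := by
    rw [hLdef, Real.logb, le_div_iff₀ hlog2, one_mul]
    exact Real.log_le_log (by norm_num) (by exact_mod_cast hn)
  have hL : (0 : ℝ) < L := lt_of_lt_of_le one_pos hn1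
  -- t ≤ n^2 hence log t ≤ 2 log n = 2 L log 2
  have htn : (t : ℝ) ≤ (n : ℝ) ^ 2 := by
    have h1 : t ≤ n * n := le_trans ht2 (le_trans (Nat.div_le_self _ _)
      (Nat.mul_le_mul_left n (Nat.sub_le n 1)))
    have : (t : ℝ) ≤ (n * n : ℕ) := by exact_mod_cast h1
    calc (t : ℝ) ≤ (n * n : ℕ) := this
      _ = (n : ℝ) ^ 2 := by push_cast; ring
  have hlogt : Real.log t ≤ 2 * L * Real.log 2 := by
    have h1 : Real.log t ≤ Real.log ((n : ℝ) ^ 2) :=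
      Real.log_le_log (by exact_mod_cast ht1) htn
    have h2 : Real.log ((n : ℝ) ^ 2) = 2 * Real.log n := by
      rw [Real.log_pow]; push_cast; ring
    have h3 : Real.log (n : ℝ) = L * Real.log 2 := by
      rw [hLdef, Real.logb, div_mul_cancel₀]
      exact ne_of_gt hlog2
    rw [h2, h3] at h1; linarith
  have hlog2' : Real.log 2 < 1 := by
    have := Real.log_two_lt_d9; linarith
  have hbound : 1 + Real.log t ≤ 12 * L := by
    nlinarith [hL, hn1, hlogt, hlog2', Real.log_nonneg (by exact_mod_cast ht1 : (1:ℝ) ≤ t)]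
  obtain ⟨S, hSne, hSgood⟩ := exists_good_subset ht1 β hβ0 hβ1 L hL hbound
  refine ⟨S, hSne, ?_⟩
  set C : ℝ := 12 * S.card * L with hCdef
  have hC0 : 0 < C := by
    rw [hCdef]
    have : (0 : ℝ) < S.card := by exact_mod_cast Finset.card_pos.mpr hSne
    positivity
  -- finiteness / bddAbove of the sup sets
  have hfin : ∀ (e : Finset V) (f : V → V → ℝ),
      {d : ℝ | ∃ u ∈ e, ∃ v ∈ e, d = f u v}.Finite := by
    intro e f
    have hsub : {d : ℝ | ∃ u ∈ e, ∃ v ∈ e, d = f u v}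
        ⊆ (fun p : V × V => f p.1 p.2) '' ((e : Set V) ×ˢ (e : Set V)) := by
      rintro d ⟨u, hu, v, hv, rfl⟩
      exact ⟨(u, v), ⟨hu, hv⟩, rfl⟩
    exact (((e.finite_toSet).prod e.finite_toSet).image _).subset hsub
  have key : ∀ e ∈ H,
      sSup {d : ℝ | ∃ u ∈ e, ∃ v ∈ e, d = ∑ i ∈ S, (x i u - x i v) ^ 2}
        ≤ C * sSup {d : ℝ | ∃ u ∈ e, ∃ v ∈ e, d = ∑ i, β i * (x i u - x i v) ^ 2} := by
    intro e he
    obtain ⟨u₀, hu₀⟩ := Finset.card_pos.mp (lt_of_lt_of_le (by norm_num) (hsize e he))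
    have hLne : {d : ℝ | ∃ u ∈ e, ∃ v ∈ e, d = ∑ i ∈ S, (x i u - x i v) ^ 2}.Nonempty :=
      ⟨∑ i ∈ S, (x i u₀ - x i u₀) ^ 2, u₀, hu₀, u₀, hu₀, rfl⟩
    have hRbdd : BddAbove {d : ℝ | ∃ u ∈ e, ∃ v ∈ e, d = ∑ i, β i * (x i u - x i v) ^ 2} :=
      (hfin e _).bddAbove
    apply csSup_le hLne
    rintro d ⟨u, hu, v, hv, rfl⟩
    have step1 : ∑ i ∈ S, (x i u - x i v) ^ 2 ≤ C * ∑ i, β i * (x i u - x i v) ^ 2 := by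
      have h1 : ∑ i ∈ S, (x i u - x i v) ^ 2 ≤ ∑ i ∈ S, C * (β i * (x i u - x i v) ^ 2) := by
        apply Finset.sum_le_sum
        intro i hi
        have := hSgood i hi
        nlinarith [sq_nonneg (x i u - x i v), hβ0 i]
      have h2 : ∑ i ∈ S, C * (β i * (x i u - x i v) ^ 2)
          ≤ ∑ i : Fin t, C * (β i * (x i u - x i v) ^ 2) := by
        apply Finset.sum_le_sum_of_subset_of_nonneg (Finset.subset_univ S)
        intro i _ _
        have := hβ0 i
        positivity
      simp only [← Finset.mul_sum] at h1 h2
      linarith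
    have step2 : ∑ i, β i * (x i u - x i v) ^ 2
        ≤ sSup {d : ℝ | ∃ u ∈ e, ∃ v ∈ e, d = ∑ i, β i * (x i u - x i v) ^ 2} :=
      le_csSup hRbdd ⟨u, hu, v, hv, rfl⟩
    calc ∑ i ∈ S, (x i u - x i v) ^ 2
        ≤ C * ∑ i, β i * (x i u - x i v) ^ 2 := step1
      _ ≤ C * sSup {d : ℝ | ∃ u ∈ e, ∃ v ∈ e, d = ∑ i, β i * (x i u - x i v) ^ 2} :=
          mul_le_mul_of_nonneg_left step2 (le_of_lt hC0)
  calc ∑ e ∈ H, sSup {d : ℝ | ∃ u ∈ e, ∃ v ∈ e, d = ∑ i ∈ S, (x i u - x i v) ^ 2}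
      ≤ ∑ e ∈ H, C * sSup {d : ℝ | ∃ u ∈ e, ∃ v ∈ e, d = ∑ i, β i * (x i u - x i v) ^ 2} :=
        Finset.sum_le_sum key
    _ = C * ∑ e ∈ H, sSup {d : ℝ | ∃ u ∈ e, ∃ v ∈ e, d = ∑ i, β i * (x i u - x i v) ^ 2} :=
        (Finset.mul_sum _ _ _).symm
end

section
/- Conditional probability of a unique success for a binomial: Let r be a real number with r ≥ 4 and let N be a positive integer with N ≤ r/4. Then N·(1/r)·(1 − 1/r)^{N−1} ≥ (1/4)·(1 − (1 − 1/r)^N). (Equivalently, for N ≤ r/4 independent trials each succeeding with probability 1/r, the conditional probability of exactly one success given at least one success is at least 1/4.) -/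
/-- **Conditional probability of a unique success for a binomial.** For a real `r ≥ 4` and a
positive integer `N ≤ r/4`, `N·(1/r)·(1 − 1/r)^{N−1} ≥ (1/4)·(1 − (1 − 1/r)^N)`; equivalently,
for `N` independent trials each succeeding with probability `1/r`, the conditional probability
of exactly one success given at least one success is at least `1/4`. -/
theorem binomial_unique_success_conditional
    (r : ℝ) (hr : 4 ≤ r) (N : ℕ) (hN1 : 1 ≤ N) (hN : (N : ℝ) ≤ r / 4) :
    (1 / 4) * (1 - (1 - 1 / r) ^ N) ≤ (N : ℝ) * (1 / r) * (1 - 1 / r) ^ (N - 1) := by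
  have hr0 : (0:ℝ) < r := by linarith
  set p := 1 / r with hp
  have hp0 : 0 < p := by positivity
  have hp1 : p ≤ 1/4 := by
    rw [hp, div_le_div_iff₀ hr0 (by norm_num)]; linarith
  have hNp : (N : ℝ) * p ≤ 1/4 := by
    rw [hp]
    calc (N:ℝ) * (1/r) ≤ (r/4) * (1/r) := by
          exact mul_le_mul_of_nonneg_right hN (by positivity)
      _ = 1/4 := by field_simp
  have hcast : ((N - 1 : ℕ) : ℝ) = (N : ℝ) - 1 := by
    have := Nat.cast_sub (R := ℝ) hN1; simpa using this
  have hbern : 1 - (N:ℝ) * p ≤ (1 - p) ^ N := by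
    have := one_add_mul_le_pow (a := -p) (by linarith) N
    have h : 1 + (N:ℝ) * (-p) = 1 - (N:ℝ) * p := by ring
    rw [h] at this
    simpa [sub_eq_add_neg] using this
  have hbern2 : 1 - ((N:ℝ) - 1) * p ≤ (1 - p) ^ (N - 1) := by
    have := one_add_mul_le_pow (a := -p) (by linarith) (N - 1)
    rw [hcast] at this
    have h : 1 + ((N:ℝ) - 1) * (-p) = 1 - ((N:ℝ) - 1) * p := by ring
    rw [h] at this
    simpa [sub_eq_add_neg] using this
  have hq : (1:ℝ)/4 ≤ (1 - p) ^ (N - 1) := by nlinarith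
  have hNp0 : 0 ≤ (N:ℝ) * p := by positivity
  nlinarith [mul_nonneg hNp0 (by linarith : (0:ℝ) ≤ (1 - p) ^ (N - 1) - 1/4)]
end
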